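/- (j* annihilates the image of ∇*.) Assume F has the du Bois-Reymond property (φ·ψ ∈ Div F^M for all ψ ∈ F implies φ = 0) and that ∇ ∘ j = 0, i.e. (∇(jφ))^a_μ = 0 for every φ ∈ F^{A′}, a ∈ A, μ ∈ M. Then j*(∇*χ) = 0 for every finitely supported χ ∈ F̄^M_A. -/

import Mathlib

noncomputable section

variable {𝔽 : Type*} [Field 𝔽] {F : Type*} [CommRing F] [Algebra 𝔽 F] {m : ℕ}
  {A A' : Type*}

/-- Membership in the space of divergences `Div F^M = {Σ_μ D_μ ψ^μ}`. -/
def IsDiv (D : Fin m → Derivation 𝔽 F F) (f : F) : Prop :=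
  ∃ ψ : Fin m → F, f = ∑ μ, D μ (ψ μ)

/-- The evolutionary differentiation `ev_φ f = Σ_a φ^a · ∂_a f` (a finite sum). -/
def ev (pa : A → Derivation 𝔽 F F) (φ : A → F) (f : F) : F :=
  ∑ᶠ a, φ a * pa a f

/-- `(∇φ)^a_μ = D_μ φ^a + Σ_b Γ^a_{μb} · φ^b`; here `Γ b μ a` denotes `Γ^b_{μa}`. -/
def nabla (D : Fin m → Derivation 𝔽 F F) (Γ : A → Fin m → A → F)
    (φ : A → F) (a : A) (μ : Fin m) : F :=
  D μ (φ a) + ∑ᶠ b, Γ a μ b * φ b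

/-- `(∇*χ)_a = -Σ_μ D_μ χ^μ_a + Σ_{μ,b} Γ^b_{μa} · χ^μ_b`. -/
def nablaStar (D : Fin m → Derivation 𝔽 F F) (Γ : A → Fin m → A → F)
    (χ : Fin m → A → F) (a : A) : F :=
  -∑ μ, D μ (χ μ a) + ∑ᶠ b, ∑ μ, Γ b μ a * χ μ b

/-- The pairing `⟨f, φ⟩ = Σ_a f_a · φ^a`. -/
def pair (f φ : A → F) : F := ∑ᶠ a, f a * φ a

/-- `D^i = D_1^{i^1} ∘ ⋯ ∘ D_m^{i^m}`. -/
def Dpow (D : Fin m → Derivation 𝔽 F F) (i : Fin m → ℕ) : F → F :=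
  (List.finRange m).foldr (fun μ g => (⇑(D μ))^[i μ] ∘ g) id

/-- `|i| = i^1 + ⋯ + i^m`. -/
def msize {m : ℕ} (i : Fin m → ℕ) : ℕ := ∑ μ, i μ

/-- The differential operator `P(D)L = Σ_i P_i · D^i L`. -/
def applyP (D : Fin m → Derivation 𝔽 F F) (P : (Fin m → ℕ) → F) (L : F) : F :=
  ∑ᶠ i, P i * Dpow D i L

/-- The Lagrange dual operator `P*(D)K = Σ_i (-1)^{|i|} D^i (P_i · K)`. -/
def applyPstar (D : Fin m → Derivation 𝔽 F F) (P : (Fin m → ℕ) → F) (K : F) : F :=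
  ∑ᶠ i, (-1 : F) ^ msize i * Dpow D i (P i * K)

/-- The jet map `(jφ)^a = Σ_{i,α} j^a_{iα} · D^i φ^α`; here `jc a i α` denotes `j^a_{iα}`. -/
def jmap (D : Fin m → Derivation 𝔽 F F) (jc : A → (Fin m → ℕ) → A' → F)
    (φ : A' → F) (a : A) : F :=
  ∑ᶠ i, ∑ᶠ α, jc a i α * Dpow D i (φ α)

/-- The Lagrange dual `(j*f)_α = Σ_{a,i} (-1)^{|i|} D^i (j^a_{iα} · f_a)`. -/
def jstar (D : Fin m → Derivation 𝔽 F F) (jc : A → (Fin m → ℕ) → A' → F)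
    (f : A → F) (α : A') : F :=
  ∑ᶠ a, ∑ᶠ i, (-1 : F) ^ msize i * Dpow D i (jc a i α * f a)

/-- `(Λf)^α = Σ_{β,i} Λ^{αβ}_i · D^i f_β`; here `Λc α β i` denotes `Λ^{αβ}_i`. -/
def Lam (D : Fin m → Derivation 𝔽 F F) (Λc : A' → A' → (Fin m → ℕ) → F)
    (f : A' → F) (α : A') : F :=
  ∑ᶠ β, ∑ᶠ i, Λc α β i * Dpow D i (f β)

/-- The Lagrange dual `(Λ*f)^α = Σ_{β,i} (-1)^{|i|} D^i (Λ^{βα}_i · f_β)`. -/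
def LamStar (D : Fin m → Derivation 𝔽 F F) (Λc : A' → A' → (Fin m → ℕ) → F)
    (f : A' → F) (α : A') : F :=
  ∑ᶠ β, ∑ᶠ i, (-1 : F) ^ msize i * Dpow D i (Λc β α i * f β)

/-- The variational derivative `δR = j*(∂R)`, where `∂R = (∂_a R)`. -/
def vard (D : Fin m → Derivation 𝔽 F F) (pa : A → Derivation 𝔽 F F)
    (jc : A → (Fin m → ℕ) → A' → F) (R : F) : A' → F :=
  jstar D jc (fun a => pa a R)

/-- The Hamiltonian vector `φ(R) = j(Λ(δR))`. -/
def hamv (D : Fin m → Derivation 𝔽 F F) (pa : A → Derivation 𝔽 F F)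
    (jc : A → (Fin m → ℕ) → A' → F) (Λc : A' → A' → (Fin m → ℕ) → F) (R : F) : A → F :=
  jmap D jc (Lam D Λc (vard D pa jc R))

/-- The commutator `[ev_ψ, Λ]`, acting with coefficients `ev_ψ(Λ^{αβ}_i)`. -/
def evLam (D : Fin m → Derivation 𝔽 F F) (pa : A → Derivation 𝔽 F F)
    (Λc : A' → A' → (Fin m → ℕ) → F) (ψ : A → F) (f : A' → F) (α : A') : F :=
  ∑ᶠ β, ∑ᶠ i, ev pa ψ (Λc α β i) * Dpow D i (f β)

/-!
Pair `(j*∇*χ)_α` with an arbitrary `ψ ∈ F` and put `φ = ψ e_α`. Modulo divergences, integration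
by parts makes `j*` the formal adjoint of `j` (since the `D_μ` commute, `(D^i)* = (-1)^|i| D^i`)
and `∇*` that of `∇`, so `(j*∇*χ)_α ψ ≡ ⟨∇*χ, jφ⟩ ≡ Σ_{a,μ} χ^μ_a (∇jφ)^a_μ = 0`. Thus
`(j*∇*χ)_α ψ` is a divergence for every `ψ`, and the du Bois-Reymond property gives
`(j*∇*χ)_α = 0`.
-/

open Finset

theorem finsum_eq_sum_of_forall_notMem {ι M : Type*} [AddCommMonoid M] {f : ι → M}
    (s : Finset ι) (h : ∀ i ∉ s, f i = 0) : ∑ᶠ i, f i = ∑ i ∈ s, f i :=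
  finsum_eq_sum_of_support_subset f (Function.support_subset_iff'.2 h)

section

variable (D : Fin m → Derivation 𝔽 F F)

def divergences : Submodule 𝔽 F where
  carrier := {f | IsDiv D f}
  zero_mem' := ⟨0, by simp⟩
  add_mem' := by
    rintro _ _ ⟨ψ, rfl⟩ ⟨ψ', rfl⟩
    exact ⟨ψ + ψ', by simp [sum_add_distrib]⟩
  smul_mem' := by
    rintro c _ ⟨ψ, rfl⟩
    exact ⟨c • ψ, by simp [smul_sum]⟩

variable {D}

theorem mem_divergences {f : F} : f ∈ divergences D ↔ IsDiv D f := Iff.rfl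

theorem derivation_mem_divergences (μ : Fin m) (ψ : F) : D μ ψ ∈ divergences D := by
  classical
  refine ⟨Pi.single μ ψ, ?_⟩
  rw [sum_eq_single μ (fun ν _ hν => by simp [Pi.single_eq_of_ne hν]) (by simp)]
  simp

theorem neg_one_pow_mul_mem_divergences (n : ℕ) {f : F} (hf : f ∈ divergences D) :
    (-1) ^ n * f ∈ divergences D := by
  simpa [zsmul_eq_mul] using zsmul_mem hf ((-1) ^ n)

variable (D) in
/-- `P* = (-1) ^ n P`, where `P*` is the formal adjoint modulo divergences. -/
def FormallySelfAdjoint (n : ℕ) (P : F → F) : Prop :=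
  ∀ g h, (-1) ^ n * P g * h - g * P h ∈ divergences D

theorem formallySelfAdjoint_id : FormallySelfAdjoint D 0 id := by
  simp [FormallySelfAdjoint]

theorem formallySelfAdjoint_derivation (μ : Fin m) : FormallySelfAdjoint D 1 (D μ) := by
  intro g h
  have : (-1) ^ 1 * D μ g * h - g * D μ h = -D μ (g * h) := by
    simp only [Derivation.leibniz, smul_eq_mul]; ring
  rw [this]
  exact neg_mem (derivation_mem_divergences μ _)

theorem FormallySelfAdjoint.comp {n k : ℕ} {P Q : F → F} (hP : FormallySelfAdjoint D n P)
    (hQ : FormallySelfAdjoint D k Q) (hPQ : Function.Commute P Q) :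
    FormallySelfAdjoint D (n + k) (P ∘ Q) := by
  intro g h
  have : (-1) ^ (n + k) * P (Q g) * h - g * P (Q h) =
      (-1) ^ k * ((-1) ^ n * P (Q g) * h - Q g * P h) + ((-1) ^ k * Q g * P h - g * Q (P h)) := by
    rw [hPQ.eq h]; ring
  rw [Function.comp_apply, Function.comp_apply, this]
  exact add_mem (neg_one_pow_mul_mem_divergences k (hP _ _)) (hQ _ _)

theorem FormallySelfAdjoint.iterate {n : ℕ} {P : F → F} (hP : FormallySelfAdjoint D n P) :
    ∀ k, FormallySelfAdjoint D (n * k) P^[k]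
  | 0 => formallySelfAdjoint_id
  | k + 1 => by
    rw [Function.iterate_succ', mul_add_one, add_comm]
    exact hP.comp (hP.iterate k) (Function.Commute.self_iterate P k)

theorem commute_foldr_iterate (hD : ∀ μ ν, Function.Commute (D μ) (D ν)) (μ : Fin m)
    (i : Fin m → ℕ) (l : List (Fin m)) :
    Function.Commute (D μ) (l.foldr (fun ν g => (⇑(D ν))^[i ν] ∘ g) id) := by
  induction l with
  | nil => exact Function.Commute.id_right
  | cons ν l ih => exact ((hD μ ν).iterate_right (i ν)).comp_right ih

theorem formallySelfAdjoint_foldr_iterate (hD : ∀ μ ν, Function.Commute (D μ) (D ν))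
    (i : Fin m → ℕ) (l : List (Fin m)) :
    FormallySelfAdjoint D (l.map i).sum (l.foldr (fun ν g => (⇑(D ν))^[i ν] ∘ g) id) := by
  induction l with
  | nil => exact formallySelfAdjoint_id
  | cons μ l ih =>
    rw [List.map_cons, List.sum_cons, ← one_mul (i μ)]
    exact ((formallySelfAdjoint_derivation μ).iterate (i μ)).comp ih
      ((commute_foldr_iterate hD μ i l).iterate_left (i μ))

theorem formallySelfAdjoint_Dpow (hD : ∀ μ ν, Function.Commute (D μ) (D ν))
    (i : Fin m → ℕ) : FormallySelfAdjoint D (msize i) (Dpow D i) := by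
  rw [msize, Fin.sum_univ_def]
  exact formallySelfAdjoint_foldr_iterate hD i _

theorem Dpow_zero (i : Fin m → ℕ) : Dpow D i (0 : F) = 0 := by
  unfold Dpow
  induction List.finRange m with
  | nil => rfl
  | cons μ l ih => exact (congrArg _ ih).trans (Function.iterate_fixed (map_zero (D μ)) (i μ))

theorem pair_single [DecidableEq A] (f : A → F) (a : A) (x : F) :
    pair f (Pi.single a x) = f a * x := by
  rw [pair, finsum_eq_single _ a fun b hb => by rw [Pi.single_eq_of_ne hb, mul_zero],
    Pi.single_eq_same]

theorem pair_jstar_sub_pair_jmap_mem_divergences (hD : ∀ μ ν, Function.Commute (D μ) (D ν))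
    {jc : A → (Fin m → ℕ) → A' → F}
    (hjfin : ∀ a : A, {p : (Fin m → ℕ) × A' | jc a p.1 p.2 ≠ 0}.Finite)
    {f : A → F} {φ : A' → F} (hf : (Function.support f).Finite)
    (hφ : (Function.support φ).Finite) :
    pair (jstar D jc f) φ - pair f (jmap D jc φ) ∈ divergences D := by
  classical
  set T := hf.toFinset
  set Φ := hφ.toFinset
  set I : A → Finset (Fin m → ℕ) := fun a => (hjfin a).toFinset.image Prod.fst
  have hT : ∀ a ∉ T, f a = 0 := by simp [T]
  have hΦ : ∀ α ∉ Φ, φ α = 0 := by simp [Φ]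
  have hI : ∀ a i α, i ∉ I a → jc a i α = 0 := fun a i α hi => by
    by_contra h
    exact hi (mem_image.2 ⟨(i, α), (hjfin a).mem_toFinset.2 h, rfl⟩)
  have hjstar : ∀ α, jstar D jc f α =
      ∑ a ∈ T, ∑ i ∈ I a, (-1) ^ msize i * Dpow D i (jc a i α * f a) := fun α => by
    rw [jstar, finsum_eq_sum_of_forall_notMem _ fun a ha => by simp [hT a ha, Dpow_zero]]
    exact sum_congr rfl fun a _ =>
      finsum_eq_sum_of_forall_notMem _ fun i hi => by simp [hI a i α hi, Dpow_zero]
  have hjmap : ∀ a, jmap D jc φ a = ∑ i ∈ I a, ∑ α ∈ Φ, jc a i α * Dpow D i (φ α) :=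
      fun a => by
    rw [jmap, finsum_eq_sum_of_forall_notMem _ fun i hi => by simp [hI a i _ hi]]
    exact sum_congr rfl fun i _ =>
      finsum_eq_sum_of_forall_notMem _ fun α hα => by simp [hΦ α hα, Dpow_zero]
  have hpair : pair (jstar D jc f) φ - pair f (jmap D jc φ) =
      ∑ a ∈ T, ∑ i ∈ I a, ∑ α ∈ Φ,
        ((-1) ^ msize i * Dpow D i (jc a i α * f a) * φ α -
          jc a i α * f a * Dpow D i (φ α)) := by
    rw [pair, pair, finsum_eq_sum_of_forall_notMem _ fun α hα => by simp [hΦ α hα],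
      finsum_eq_sum_of_forall_notMem _ fun a ha => by simp [hT a ha]]
    simp only [hjstar, hjmap, sum_mul, mul_sum, sum_sub_distrib]
    rw [sum_comm]
    refine congrArg₂ _ (sum_congr rfl fun a _ => sum_comm) (sum_congr rfl fun a _ =>
      sum_congr rfl fun i _ => sum_congr rfl fun α _ => by ring)
  rw [hpair]
  exact sum_mem fun a _ => sum_mem fun i _ => sum_mem fun α _ =>
    formallySelfAdjoint_Dpow hD i _ _

variable {Γ : A → Fin m → A → F} {χ : Fin m → A → F} {S : Finset A}

theorem exists_finset_mem_of_ne_zero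
    (hΓfin : ∀ b : A, {p : Fin m × A | Γ b p.1 p.2 ≠ 0}.Finite)
    (hχfin : {p : Fin m × A | χ p.1 p.2 ≠ 0}.Finite) :
    ∃ S : Finset A, (∀ μ a, χ μ a ≠ 0 → a ∈ S) ∧
      ∀ μ a b, χ μ b ≠ 0 → Γ b μ a ≠ 0 → a ∈ S := by
  have hS₀ := hχfin.image Prod.snd
  have hS₁ := hS₀.biUnion fun b _ => (hΓfin b).image Prod.snd
  refine ⟨(hS₀.union hS₁).toFinset, fun μ a h => ?_, fun μ a b hb h => ?_⟩
  · simp only [Set.Finite.mem_toFinset]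
    exact .inl ⟨(μ, a), h, rfl⟩
  · simp only [Set.Finite.mem_toFinset]
    exact .inr (Set.mem_biUnion ⟨(μ, b), hb, rfl⟩ ⟨(μ, a), h, rfl⟩)

theorem nablaStar_eq_finset_sum (hχS : ∀ μ a, χ μ a ≠ 0 → a ∈ S) (a : A) :
    nablaStar D Γ χ a = -∑ μ, D μ (χ μ a) + ∑ b ∈ S, ∑ μ, Γ b μ a * χ μ b := by
  rw [nablaStar, finsum_eq_sum_of_forall_notMem _ fun b hb =>
    sum_eq_zero fun μ _ => by rw [Not.imp_symm (hχS μ b) hb, mul_zero]]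

theorem nablaStar_eq_zero_of_notMem (hχS : ∀ μ a, χ μ a ≠ 0 → a ∈ S)
    (hΓS : ∀ μ a b, χ μ b ≠ 0 → Γ b μ a ≠ 0 → a ∈ S) {a : A} (ha : a ∉ S) :
    nablaStar D Γ χ a = 0 := by
  simp only [nablaStar_eq_finset_sum hχS, fun μ => Not.imp_symm (hχS μ a) ha,
    map_zero, sum_const_zero, neg_zero, zero_add]
  refine sum_eq_zero fun b _ => sum_eq_zero fun μ _ => ?_
  by_contra h
  exact ha (hΓS μ a b (right_ne_zero_of_mul h) (left_ne_zero_of_mul h))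

theorem finite_support_nablaStar (hΓfin : ∀ b : A, {p : Fin m × A | Γ b p.1 p.2 ≠ 0}.Finite)
    (hχfin : {p : Fin m × A | χ p.1 p.2 ≠ 0}.Finite) :
    (Function.support (nablaStar D Γ χ)).Finite := by
  obtain ⟨S, hχS, hΓS⟩ := exists_finset_mem_of_ne_zero hΓfin hχfin
  exact S.finite_toSet.subset
    (Function.support_subset_iff'.2 fun a ha => nablaStar_eq_zero_of_notMem hχS hΓS ha)

theorem pair_nablaStar_sub_mem_divergences
    (hΓfin : ∀ b : A, {p : Fin m × A | Γ b p.1 p.2 ≠ 0}.Finite)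
    (hχfin : {p : Fin m × A | χ p.1 p.2 ≠ 0}.Finite) (u : A → F) :
    pair (nablaStar D Γ χ) u - ∑ᶠ a, ∑ μ, χ μ a * nabla D Γ u a μ ∈
      divergences D := by
  obtain ⟨S, hχS, hΓS⟩ := exists_finset_mem_of_ne_zero hΓfin hχfin
  have hχ : ∀ μ, ∀ a ∉ S, χ μ a = 0 := fun μ a => Not.imp_symm (hχS μ a)
  have hnabla : ∀ μ a, χ μ a * nabla D Γ u a μ =
      χ μ a * (D μ (u a) + ∑ b ∈ S, Γ a μ b * u b) := fun μ a => by
    by_cases h : χ μ a = 0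
    · simp [h]
    rw [nabla, finsum_eq_sum_of_forall_notMem _ fun b hb => by
      rw [Not.imp_symm (hΓS μ b a h) hb, zero_mul]]
  have hΓswap : ∑ a ∈ S, (∑ b ∈ S, ∑ μ, Γ b μ a * χ μ b) * u a =
      ∑ a ∈ S, ∑ μ, χ μ a * ∑ b ∈ S, Γ a μ b * u b := by
    simp only [sum_mul, mul_sum]
    rw [sum_comm]
    exact sum_congr rfl fun b _ => sum_comm.trans (sum_congr rfl fun a _ =>
      sum_congr rfl fun μ _ => by ring)
  have key : pair (nablaStar D Γ χ) u - ∑ᶠ a, ∑ μ, χ μ a * nabla D Γ u a μ =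
      -∑ a ∈ S, ∑ μ, D μ (χ μ a * u a) := by
    rw [pair, finsum_eq_sum_of_forall_notMem _ fun a ha => by
        rw [nablaStar_eq_zero_of_notMem hχS hΓS ha, zero_mul],
      finsum_eq_sum_of_forall_notMem _ fun a ha =>
        sum_eq_zero fun μ _ => by rw [hχ μ a ha, zero_mul]]
    simp only [nablaStar_eq_finset_sum hχS, hnabla, add_mul, sum_add_distrib, hΓswap]
    simp only [mul_add, sum_add_distrib, Derivation.leibniz, smul_eq_mul, neg_mul, sum_neg_distrib,
      sum_mul, mul_comm (u _)]
    ring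
  rw [key]
  exact neg_mem (sum_mem fun a _ => sum_mem fun μ _ => derivation_mem_divergences μ _)

end

theorem stmt_10_general
    {𝔽 : Type*} [Field 𝔽] {F : Type*} [CommRing F] [Algebra 𝔽 F]
    {m : ℕ} {A A' : Type*}
    (D : Fin m → Derivation 𝔽 F F)
    (hDcomm : ∀ μ ν (f : F), D μ (D ν f) = D ν (D μ f))
    (Γ : A → Fin m → A → F)
    (hΓfin : ∀ b : A, {p : Fin m × A | Γ b p.1 p.2 ≠ 0}.Finite)
    (hdBR : ∀ φ : F, (∀ ψ : F, IsDiv D (φ * ψ)) → φ = 0)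
    (jc : A → (Fin m → ℕ) → A' → F)
    (hjfin : ∀ a : A, {p : (Fin m → ℕ) × A' | jc a p.1 p.2 ≠ 0}.Finite)
    (hnj : ∀ (φ : A' → F) (a : A) (μ : Fin m), nabla D Γ (jmap D jc φ) a μ = 0)
    (χ : Fin m → A → F)
    (hχfin : {p : Fin m × A | χ p.1 p.2 ≠ 0}.Finite) :
    ∀ α : A', jstar D jc (nablaStar D Γ χ) α = 0 := by
  classical
  intro α
  refine hdBR _ fun ψ => ?_
  have hφ : (Function.support (Pi.single α ψ)).Finite :=
    (Set.finite_singleton α).subset Pi.support_single_subset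
  have hj := pair_jstar_sub_pair_jmap_mem_divergences (fun μ ν x => hDcomm μ ν x) hjfin
    (finite_support_nablaStar (D := D) hΓfin hχfin) hφ
  have hn := pair_nablaStar_sub_mem_divergences (D := D) hΓfin hχfin (jmap D jc (Pi.single α ψ))
  simp only [hnj, mul_zero, sum_const_zero, finsum_zero, sub_zero] at hn
  simpa [pair_single, mem_divergences] using add_mem hj hn

/-- `j*` annihilates the image of `∇*`: assuming the
du Bois-Reymond property and `∇ ∘ j = 0`, one has `j*(∇*χ) = 0` for every
finitely supported `χ`. -/
theorem stmt_10
    {𝔽 : Type*} [Field 𝔽] [CharZero 𝔽] {F : Type*} [CommRing F] [Algebra 𝔽 F]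
    {m : ℕ} {A A' : Type*}
    (D : Fin m → Derivation 𝔽 F F)
    (hDcomm : ∀ μ ν (f : F), D μ (D ν f) = D ν (D μ f))
    (Γ : A → Fin m → A → F)
    (hΓfin : ∀ b : A, {p : Fin m × A | Γ b p.1 p.2 ≠ 0}.Finite)
    (hdBR : ∀ φ : F, (∀ ψ : F, IsDiv D (φ * ψ)) → φ = 0)
    (jc : A → (Fin m → ℕ) → A' → F)
    (hjfin : ∀ a : A, {p : (Fin m → ℕ) × A' | jc a p.1 p.2 ≠ 0}.Finite)
    (hnj : ∀ (φ : A' → F) (a : A) (μ : Fin m), nabla D Γ (jmap D jc φ) a μ = 0)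
    (χ : Fin m → A → F)
    (hχfin : {p : Fin m × A | χ p.1 p.2 ≠ 0}.Finite) :
    ∀ α : A', jstar D jc (nablaStar D Γ χ) α = 0 :=
  stmt_10_general D hDcomm Γ hΓfin hdBR jc hjfin hnj χ hχfin
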